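/- arXiv:0910.1359 — 2 statements merged into one kernel-verified Lean document; each statement's English description precedes it below -/
import Mathlib

section
/- With μ = λ/√π and any δ ∈ (0,1), if X ~ EXP(λ) and Y = πX², then δ·e^(−μ√δ) ≤ P({Y} < δ) ≤ 1 − e^(−μ√δ) + δ. -/
open MeasureTheory Set
open scoped Real

/-! The event `{πX²} < δ` is the disjoint union of the events `X ∈ [√(j/π), √((j+δ)/π))`,
`j ∈ ℕ`, so its probability is `∑ⱼ (g j - g (j + δ))` with `g t = exp (-m √t)`. Since `g` is
convex and decreases from `g 0 = 1` to `0`, comparing slopes bounds the `j`-th term below by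
`δ (g j - g (j + 1))` and, for `j ≥ 1`, above by `δ (g (j - 1) - g j)`; these telescope to
`δ ≤ P({Y} < δ) ≤ 1 - g δ + δ`. -/

open Filter Topology ProbabilityTheory

section ConvexTelescoping

variable {g : ℝ → ℝ} {δ : ℝ}

lemma Antitone.hasSum_sub_nat_succ (hg : Antitone g)
    (hlim : Tendsto (fun n : ℕ => g n) atTop (𝓝 0)) :
    HasSum (fun n : ℕ => g n - g (n + 1)) (g 0) := by
  rw [hasSum_iff_tendsto_nat_of_nonneg fun n => sub_nonneg.2 (hg (by linarith))]
  have htele (n : ℕ) : ∑ i ∈ Finset.range n, (g i - g (i + 1)) = g 0 - g n := by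
    simpa using Finset.sum_range_sub' (fun i : ℕ => g i) n
  simpa [htele] using tendsto_const_nhds.sub hlim

lemma ConvexOn.mul_sub_add_one_le_sub_add (hconv : ConvexOn ℝ (Ici 0) g) {x : ℝ} (hx : 0 ≤ x)
    (hδ0 : 0 ≤ δ) (hδ1 : δ ≤ 1) :
    δ * (g x - g (x + 1)) ≤ g x - g (x + δ) := by
  have h := hconv.2 (mem_Ici.2 hx) (mem_Ici.2 (by linarith : (0 : ℝ) ≤ x + 1))
    (sub_nonneg.2 hδ1) hδ0 (by ring)
  rw [smul_eq_mul, smul_eq_mul, smul_eq_mul, smul_eq_mul,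
    show (1 - δ) * x + δ * (x + 1) = x + δ by ring] at h
  linarith

lemma ConvexOn.sub_add_le_mul_sub (hconv : ConvexOn ℝ (Ici 0) g) {x : ℝ} (hx : 0 ≤ x)
    (hδ0 : 0 < δ) :
    g (x + 1) - g (x + 1 + δ) ≤ δ * (g x - g (x + 1)) := by
  have h := hconv.slope_mono_adjacent (mem_Ici.2 hx) (mem_Ici.2 (by linarith))
    (by linarith : x < x + 1) (by linarith : x + 1 < x + 1 + δ)
  rw [add_sub_cancel_left, add_sub_cancel_left, div_one, le_div_iff₀ hδ0] at h
  linarith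

lemma Antitone.summable_sub_add (hanti : Antitone g)
    (hlim : Tendsto (fun n : ℕ => g n) atTop (𝓝 0)) (hδ0 : 0 ≤ δ) (hδ1 : δ ≤ 1) :
    Summable fun j : ℕ => g j - g (j + δ) :=
  (hanti.hasSum_sub_nat_succ hlim).summable.of_nonneg_of_le
    (fun j => sub_nonneg.2 (hanti (by linarith))) fun j => by
      linarith [hanti (by linarith : (j : ℝ) + δ ≤ j + 1)]

lemma ConvexOn.mul_le_tsum_sub_add (hconv : ConvexOn ℝ (Ici 0) g) (hanti : Antitone g)
    (hlim : Tendsto (fun n : ℕ => g n) atTop (𝓝 0)) (hδ0 : 0 ≤ δ) (hδ1 : δ ≤ 1) :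
    δ * g 0 ≤ ∑' j : ℕ, (g j - g (j + δ)) := by
  have hv := (hanti.hasSum_sub_nat_succ hlim).mul_left δ
  exact hv.tsum_eq ▸ hv.summable.tsum_le_tsum
    (fun j => hconv.mul_sub_add_one_le_sub_add j.cast_nonneg hδ0 hδ1)
    (hanti.summable_sub_add hlim hδ0 hδ1)

lemma ConvexOn.tsum_sub_add_le (hconv : ConvexOn ℝ (Ici 0) g) (hanti : Antitone g)
    (hlim : Tendsto (fun n : ℕ => g n) atTop (𝓝 0)) (hδ0 : 0 < δ) (hδ1 : δ ≤ 1) :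
    ∑' j : ℕ, (g j - g (j + δ)) ≤ g 0 - g δ + δ * g 0 := by
  have hv := (hanti.hasSum_sub_nat_succ hlim).mul_left δ
  have hu := hanti.summable_sub_add hlim hδ0.le hδ1
  rw [hu.tsum_eq_zero_add, ← hv.tsum_eq]
  simp only [Nat.cast_zero, zero_add, Nat.cast_succ, add_le_add_iff_left]
  exact Summable.tsum_le_tsum (fun j => hconv.sub_add_le_mul_sub j.cast_nonneg hδ0)
    (by simpa using (summable_nat_add_iff 1).2 hu) hv.summable

end ConvexTelescoping

section FractSublevel

variable {R : Type*} [Field R] [LinearOrder R] [IsStrictOrderedRing R] {δ : R}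

lemma Int.setOf_fract_lt_inter_Ici [FloorRing R] (hδ : δ ≤ 1) :
    {y : R | Int.fract y < δ} ∩ Ici 0 = ⋃ j : ℕ, Ico (j : R) (j + δ) := by
  ext y
  simp only [mem_inter_iff, mem_ofPred_eq, mem_Ici, mem_iUnion, mem_Ico]
  constructor
  · rintro ⟨hfract, hy⟩
    rw [Int.fract, ← Int.natCast_floor_eq_floor hy, Int.cast_natCast] at hfract
    exact ⟨⌊y⌋₊, Nat.floor_le hy, by linarith⟩
  · rintro ⟨j, hjy, hyj⟩
    have hfloor : ⌊y⌋ = j := Int.floor_eq_iff.2 ⟨by exact_mod_cast hjy, by push_cast; linarith⟩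
    refine ⟨?_, j.cast_nonneg.trans hjy⟩
    rw [Int.fract, hfloor, Int.cast_natCast]
    linarith

lemma pairwise_disjoint_Ico_natCast_add (hδ : δ ≤ 1) :
    Pairwise (Function.onFun Disjoint fun j : ℕ => Ico (j : R) (j + δ)) := fun i j hij =>
  (((pairwise_disjoint_Ico_intCast R).comp_of_injective Nat.cast_injective) hij).mono
    (by simpa using Ico_subset_Ico_right (by linarith))
    (by simpa using Ico_subset_Ico_right (by linarith))

end FractSublevel

lemma Ici_inter_preimage_mul_sq_Ico {c : ℝ} (hc : 0 < c) (s t : ℝ) :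
    Ici 0 ∩ (fun x => c * x ^ 2) ⁻¹' Ico s t = Ico (√(s / c)) (√(t / c)) := by
  ext x
  by_cases hx : 0 ≤ x
  · simp [hx, Real.sqrt_le_left hx, Real.lt_sqrt hx, div_le_iff₀' hc, lt_div_iff₀' hc]
  · simp only [mem_inter_iff, mem_Ici, hx, false_and, false_iff, mem_Ico, not_and]
    exact fun hs => absurd ((Real.sqrt_nonneg _).trans hs) hx

section ExpNegMulSqrt

variable {m : ℝ}

lemma antitone_exp_neg_mul_sqrt (hm : 0 ≤ m) : Antitone fun t => Real.exp (-m * √t) :=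
  fun _ _ h => Real.exp_le_exp.2 <| by
    simpa only [neg_mul, neg_le_neg_iff] using mul_le_mul_of_nonneg_left (Real.sqrt_le_sqrt h) hm

lemma convexOn_exp_neg_mul_sqrt (hm : 0 ≤ m) :
    ConvexOn ℝ (Ici 0) fun t => Real.exp (-m * √t) := by
  have hinner : ConvexOn ℝ (Ici 0) fun t => -m * √t := by
    simpa [Pi.neg_def, smul_eq_mul, neg_mul] using (Real.strictConcaveOn_sqrt.concaveOn.smul hm).neg
  refine ⟨convex_Ici 0, fun x hx y hy a b ha hb hab => ?_⟩
  calc Real.exp (-m * √(a • x + b • y))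
      ≤ Real.exp (a • (-m * √x) + b • (-m * √y)) := Real.exp_le_exp.2 (hinner.2 hx hy ha hb hab)
    _ ≤ a • Real.exp (-m * √x) + b • Real.exp (-m * √y) :=
      convexOn_exp.2 (mem_univ _) (mem_univ _) ha hb hab

lemma tendsto_exp_neg_mul_sqrt_natCast (hm : 0 < m) :
    Tendsto (fun n : ℕ => Real.exp (-m * √n)) atTop (𝓝 0) :=
  Real.tendsto_exp_atBot.comp <| (Real.tendsto_sqrt_atTop.comp
    tendsto_natCast_atTop_atTop).const_mul_atTop_of_neg (neg_lt_zero.2 hm)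

end ExpNegMulSqrt

namespace ProbabilityTheory

variable {r : ℝ}

instance nullSingletonClass_expMeasure : NullSingletonClass (expMeasure r) := by
  unfold expMeasure gammaMeasure
  infer_instance

lemma expMeasure_Iio_zero (r : ℝ) : expMeasure r (Iio 0) = 0 := by
  rw [expMeasure, gammaMeasure, withDensity_apply _ measurableSet_Iio]
  exact lintegral_exponentialPDF_of_nonpos le_rfl

lemma expMeasure_Ico (hr : 0 < r) {x y : ℝ} (hx : 0 ≤ x) (hxy : x ≤ y) :
    expMeasure r (Ico x y) = ENNReal.ofReal (Real.exp (-(r * x)) - Real.exp (-(r * y))) := by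
  have := isProbabilityMeasure_expMeasure hr
  rw [measure_congr Ico_ae_eq_Ioc, ← measure_cdf (expMeasure r), StieltjesFunction.measure_Ioc,
    cdf_expMeasure_eq hr, cdf_expMeasure_eq hr, if_pos hx, if_pos (hx.trans hxy),
    sub_sub_sub_cancel_left]

lemma toReal_expMeasure_setOf_fract_mul_sq_lt (hr : 0 < r) {c δ : ℝ} (hc : 0 < c) (hδ0 : 0 ≤ δ)
    (hδ1 : δ ≤ 1) :
    (expMeasure r {x | Int.fract (c * x ^ 2) < δ}).toReal
      = ∑' j : ℕ, (Real.exp (-(r / √c) * √j) - Real.exp (-(r / √c) * √(j + δ))) := by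
  have := isProbabilityMeasure_expMeasure hr
  set f : ℝ → ℝ := fun x => c * x ^ 2
  have hpieces (j : ℕ) : Ici 0 ∩ f ⁻¹' Ico (j : ℝ) (j + δ) = Ico (√(j / c)) (√((j + δ) / c)) :=
    Ici_inter_preimage_mul_sq_Ico hc _ _
  have hset :
      {x | Int.fract (c * x ^ 2) < δ} ∩ Ici 0 = ⋃ j : ℕ, Ico (√(j / c)) (√((j + δ) / c)) := by
    have hf : {x | Int.fract (c * x ^ 2) < δ} = f ⁻¹' ({y | Int.fract y < δ} ∩ Ici 0) := by
      ext x
      exact (and_iff_left (show (0 : ℝ) ≤ c * x ^ 2 by positivity)).symm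
    simp_rw [← hpieces, ← inter_iUnion, ← preimage_iUnion, ← Int.setOf_fract_lt_inter_Ici hδ1, hf,
      inter_comm]
  have hdisj : Pairwise (Function.onFun Disjoint fun j : ℕ => Ico (√(j / c)) (√((j + δ) / c))) :=
    fun i j hij => by
      simpa only [Function.onFun, ← hpieces] using
        ((pairwise_disjoint_Ico_natCast_add hδ1 hij).preimage f).mono inter_subset_right
          inter_subset_right
  have hexp (t : ℝ) : Real.exp (-(r * √(t / c))) = Real.exp (-(r / √c) * √t) := by
    rw [Real.sqrt_div' _ hc.le, neg_mul, mul_div_assoc', div_mul_eq_mul_div]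
  have hanti := antitone_exp_neg_mul_sqrt (div_nonneg hr.le (Real.sqrt_nonneg c))
  rw [← measure_inter_conull (t := Ici 0) (by rw [compl_Ici]; exact expMeasure_Iio_zero r), hset,
    measure_iUnion hdisj fun _ => measurableSet_Ico,
    ENNReal.tsum_toReal_eq fun _ => measure_ne_top _ _]
  congr 1 with j
  rw [expMeasure_Ico hr (Real.sqrt_nonneg _) (Real.sqrt_le_sqrt (by gcongr; linarith)), hexp, hexp,
    ENNReal.toReal_ofReal (sub_nonneg.2 (hanti (by linarith)))]

end ProbabilityTheory

/-- Key estimate in the proof of Theorem 4: for `X ~ EXP(λ)`, `Y = πX²` and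
`μ' = λ/√π`, one has `δ·e^(−μ'√δ) ≤ P({Y} < δ) ≤ 1 − e^(−μ'√δ) + δ`
for any `δ ∈ (0,1)`. -/
theorem exponential_pi_sq_fract_bounds
    (l : ℝ) (hl : 0 < l)
    (μ : Measure ℝ)
    (hμ : μ = volume.withDensity
      (fun x => ENNReal.ofReal (if 0 ≤ x then l * Real.exp (-l * x) else 0)))
    (m : ℝ) (hm : m = l / Real.sqrt π)
    (δ : ℝ) (hδ : δ ∈ Ioo (0 : ℝ) 1) :
    δ * Real.exp (-m * Real.sqrt δ)
        ≤ (μ {x : ℝ | Int.fract (π * x ^ 2) < δ}).toReal ∧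
    (μ {x : ℝ | Int.fract (π * x ^ 2) < δ}).toReal
        ≤ 1 - Real.exp (-m * Real.sqrt δ) + δ := by
  obtain ⟨hδ0, hδ1⟩ := hδ
  have hm0 : 0 < m := hm ▸ div_pos hl (Real.sqrt_pos.2 Real.pi_pos)
  have hμexp : μ = expMeasure l := by
    rw [hμ, expMeasure, gammaMeasure]
    congr 1 with x
    rw [neg_mul]
    exact (exponentialPDF_eq l x).symm
  have hconv := convexOn_exp_neg_mul_sqrt hm0.le
  have hanti := antitone_exp_neg_mul_sqrt hm0.le
  have hlim := tendsto_exp_neg_mul_sqrt_natCast hm0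
  rw [hμexp, toReal_expMeasure_setOf_fract_mul_sq_lt hl Real.pi_pos hδ0.le hδ1.le, ← hm]
  constructor
  · calc δ * Real.exp (-m * √δ) ≤ δ * Real.exp (-m * √0) :=
          mul_le_mul_of_nonneg_left (hanti hδ0.le) hδ0.le
      _ ≤ _ := hconv.mul_le_tsum_sub_add hanti hlim hδ0.le hδ1.le
  · simpa using hconv.tsum_sub_add_le hanti hlim hδ0 hδ1.le
end

section
/- There is no positive random variable X that satisfies base-b Benford's law (i.e., {log_b X} uniform on [0,1)) simultaneously for every integer base b ≥ 2. -/
/-!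
If `{log_b X}` is uniform on `[0,1)`, the first Fourier coefficient `E[cos (2π log_b X)]` of
`log_b X` vanishes. But `log_b x = log x / log b → 0` pointwise as `b → ∞`, so by dominated
convergence the same expectations tend to `E[1] = 1`.
-/

open MeasureTheory Set Filter Topology Real

lemma cos_two_pi_mul_fract (y : ℝ) : cos (2 * π * Int.fract y) = cos (2 * π * y) := by
  rw [Int.fract, mul_sub, show 2 * π * (⌊y⌋ : ℝ) = ⌊y⌋ * (2 * π) by ring, cos_sub_int_mul_two_pi]

lemma setIntegral_Ico_zero_one_cos_two_pi_mul : ∫ y in Ico (0 : ℝ) 1, cos (2 * π * y) = 0 := by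
  rw [integral_Ico_eq_integral_Ioc, ← intervalIntegral.integral_of_le zero_le_one,
    intervalIntegral.integral_comp_mul_left _ (by positivity : 2 * π ≠ 0), integral_cos]
  simp

lemma integral_cos_two_pi_mul_eq_zero_of_map_fract {α : Type*} [MeasurableSpace α]
    {μ : Measure α} {f : α → ℝ} (hf : Measurable f)
    (h : μ.map (fun x => Int.fract (f x)) = volume.restrict (Ico (0 : ℝ) 1)) :
    ∫ x, cos (2 * π * f x) ∂μ = 0 := by
  simp_rw [← cos_two_pi_mul_fract (f _)]
  rw [← integral_map (φ := fun x => Int.fract (f x)) (f := fun y => cos (2 * π * y))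
    (measurable_fract.comp hf).aemeasurable (by fun_prop), h]
  exact setIntegral_Ico_zero_one_cos_two_pi_mul

lemma measurable_logb (b : ℝ) : Measurable (logb b) := by
  unfold logb; fun_prop

lemma tendsto_logb_natCast_atTop (x : ℝ) : Tendsto (fun b : ℕ => logb b x) atTop (𝓝 0) :=
  tendsto_const_nhds.div_atTop (tendsto_log_atTop.comp tendsto_natCast_atTop_atTop)

lemma tendsto_integral_cos_two_pi_mul_logb {μ : Measure ℝ} [IsFiniteMeasure μ] :
    Tendsto (fun b : ℕ => ∫ x, cos (2 * π * logb b x) ∂μ) atTop (𝓝 (μ.real univ)) := by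
  have hcos : ∀ x, Tendsto (fun b : ℕ => cos (2 * π * logb b x)) atTop (𝓝 1) := fun x => by
    simpa [Function.comp_def] using
      (continuous_cos.tendsto _).comp ((tendsto_logb_natCast_atTop x).const_mul (2 * π))
  simpa using tendsto_integral_of_dominated_convergence (fun _ => (1 : ℝ))
    (fun b => (continuous_cos.measurable.comp
      ((measurable_logb b).const_mul (2 * π))).aestronglyMeasurable)
    (integrable_const 1) (fun b => ae_of_all _ fun x => by simpa using abs_cos_le_one _)
    (ae_of_all _ hcos)

/-- Luque–Lacasa: no positive random variable satisfies base-`b` Benford's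
law (`{log_b X}` uniform on `[0,1)`) simultaneously for every integer base
`b ≥ 2`. -/
theorem no_universal_benford :
    ¬ ∃ μ : Measure ℝ, IsProbabilityMeasure μ ∧ μ (Ioi (0 : ℝ))ᶜ = 0 ∧
      ∀ b : ℕ, 2 ≤ b →
        Measure.map (fun x => Int.fract (Real.logb b x)) μ
          = volume.restrict (Ico (0 : ℝ) 1) := by
  rintro ⟨μ, hμ, -, hbenford⟩
  have hlim := tendsto_integral_cos_two_pi_mul_logb (μ := μ)
  have hzero : (fun b : ℕ => ∫ x, cos (2 * π * logb b x) ∂μ) =ᶠ[atTop] fun _ => 0 := by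
    filter_upwards [eventually_ge_atTop 2] with b hb
    exact integral_cos_two_pi_mul_eq_zero_of_map_fract (measurable_logb b) (hbenford b hb)
  rw [probReal_univ] at hlim
  exact one_ne_zero (tendsto_nhds_unique hlim (tendsto_const_nhds.congr' hzero.symm))
end
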